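/- (First-best pricing achieves system optimum with Pareto improvement.) In the reduced morning-commute corridor network, let (q_i^E, w_i^E, ρ_i^E) be a DUE whose queuing delays equal the DSO prices, w_i^E = p_i (such a DUE exists when −1 ≤ s'(t) on 𝒯_N and s'(t) ≤ μ_i/μ_{i+1} − 1 on 𝒯_i \ 𝒯_{i−1} for all i < N). Then imposing dynamic prices p_i = w_i^E on every bottleneck yields the pricing equilibrium (q_i, p_i, ρ_i): the resulting flow pattern (q_i) minimizes the social transport cost Σ_{i=1}^{N} ∫_0^T (s(t)+c_i)·r_i(t) dt over all feasible flow patterns (r_i), and ρ_i = ρ_i^E for every i, so no commuter's equilibrium commuting cost increases (a Pareto improvement). -/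

import Mathlib

open MeasureTheory Finset Set
open scoped Classical

noncomputable section

/-- Basic corridor-network primitives: `N ≥ 1` bottlenecks, rush hour `[0,T]`,
capacities `μ`, demands `Q`, free-flow times `c`, and a continuous, strictly
quasi-convex schedule-delay function `s` with minimum `0` at `td ∈ (0,T)`. -/
def CorridorNet (N : ℕ) (T td : ℝ) (μ Q c : ℕ → ℝ) (s : ℝ → ℝ) : Prop :=
  1 ≤ N ∧ 0 < T ∧ td ∈ Set.Ioo (0:ℝ) T ∧
  (∀ i ∈ Finset.Icc 1 N, 0 < μ i ∧ 0 < Q i ∧ 0 ≤ c i) ∧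
  ContinuousOn s (Set.Icc 0 T) ∧ (∀ t ∈ Set.Icc (0:ℝ) T, 0 ≤ s t) ∧ s td = 0 ∧
  (∀ a ∈ Set.Icc (0:ℝ) T, ∀ b ∈ Set.Icc (0:ℝ) T, a ≠ b →
    ∀ l ∈ Set.Ioo (0:ℝ) 1, s (l * a + (1 - l) * b) < max (s a) (s b))

/-- Pricing equilibrium: bounded measurable nonnegative flows `q` and prices `p`
with constants `ρ`, satisfying (E1), (E2), (E3). -/
def IsPricingEq (N : ℕ) (T : ℝ) (μ Q c : ℕ → ℝ) (s : ℝ → ℝ)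
    (q p : ℕ → ℝ → ℝ) (ρ : ℕ → ℝ) : Prop :=
  (∀ i ∈ Finset.Icc 1 N, Measurable (q i) ∧ Measurable (p i)) ∧
  (∀ i ∈ Finset.Icc 1 N, ∃ M : ℝ, ∀ t ∈ Set.Icc (0:ℝ) T, q i t ≤ M ∧ p i t ≤ M) ∧
  (∀ i ∈ Finset.Icc 1 N, ∀ t ∈ Set.Icc (0:ℝ) T, 0 ≤ q i t ∧ 0 ≤ p i t) ∧
  (∀ i ∈ Finset.Icc 1 N, ∀ t ∈ Set.Icc (0:ℝ) T,
    ρ i ≤ s t + c i + ∑ j ∈ Finset.Icc 1 i, p j t ∧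
    (0 < q i t → s t + c i + ∑ j ∈ Finset.Icc 1 i, p j t = ρ i)) ∧
  (∀ i ∈ Finset.Icc 1 N, ∀ t ∈ Set.Icc (0:ℝ) T,
    (∑ j ∈ Finset.Icc i N, q j t) ≤ μ i ∧
    (0 < p i t → (∑ j ∈ Finset.Icc i N, q j t) = μ i)) ∧
  (∀ i ∈ Finset.Icc 1 N, ∫ t in (0:ℝ)..T, q i t = Q i)

/-- `μ̂ i = μ i − μ (i+1)` for `i < N`, and `μ̂ N = μ N`. -/
def muhat (N : ℕ) (μ : ℕ → ℝ) (i : ℕ) : ℝ :=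
  if i < N then μ i - μ (i + 1) else μ N

/-- Reduced-network assumptions: strictly decreasing capacities, strictly
increasing window lengths `T_i = Q_i/μ̂_i`, and windows `𝒯_i = [tm i, tp i] ⊆ (0,T)`
of length `T_i` with `s (tm i) = s (tp i)`. -/
def ReducedNet (N : ℕ) (T : ℝ) (μ Q : ℕ → ℝ) (s : ℝ → ℝ) (tm tp : ℕ → ℝ) : Prop :=
  (∀ i, 1 ≤ i → i < N → μ (i + 1) < μ i) ∧ 0 < μ N ∧
  (∀ i, 1 ≤ i → i < N → Q i / muhat N μ i < Q (i + 1) / muhat N μ (i + 1)) ∧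
  (∀ i ∈ Finset.Icc 1 N, 0 < tm i ∧ tp i < T ∧
    tp i - tm i = Q i / muhat N μ i ∧ s (tm i) = s (tp i))

/-- The explicit DSO collection: `q_i = μ̂_i·1_{𝒯_i}`, `ρ_i = s(t_i^-) + c_i`, and
`p_i(t) = ρ_i − s(t) − c_i − Σ_{j<i} p_j(t)` on `𝒯_i`, `0` otherwise. -/
def ExplicitDSO (N : ℕ) (μ c : ℕ → ℝ) (s : ℝ → ℝ) (tm tp : ℕ → ℝ)
    (q p : ℕ → ℝ → ℝ) (ρ : ℕ → ℝ) : Prop :=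
  (∀ i ∈ Finset.Icc 1 N, ∀ t : ℝ,
    q i t = if t ∈ Set.Icc (tm i) (tp i) then muhat N μ i else 0) ∧
  (∀ i ∈ Finset.Icc 1 N, ρ i = s (tm i) + c i) ∧
  (∀ i ∈ Finset.Icc 1 N, ∀ t : ℝ,
    p i t = if t ∈ Set.Icc (tm i) (tp i)
      then ρ i - s t - c i - ∑ j ∈ Finset.Icc 1 (i - 1), p j t else 0)

/-- `s` is continuously differentiable on `[0,td]` and on `[td,T]`,
with derivative `s'`. -/
def PiecewiseC1 (T td : ℝ) (s s' : ℝ → ℝ) : Prop :=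
  (∀ t ∈ Set.Icc (0:ℝ) T, t ≠ td → HasDerivAt s (s' t) t) ∧
  ContinuousOn s' (Set.Icc 0 td) ∧ ContinuousOn s' (Set.Icc td T)

/-- Dynamic user equilibrium for the morning commute: bounded measurable
nonnegative arrival flows `qE`, piecewise continuously differentiable
nonnegative queuing delays `wE`, constants `ρE`, satisfying (D1), (D2), (D3),
where `σ_i^E(t) = t − Σ_{j=1}^{i−1} wE_j(t) − c_i`. -/
def IsMorningDUE (N : ℕ) (T : ℝ) (μ Q c : ℕ → ℝ) (s : ℝ → ℝ)
    (qE wE : ℕ → ℝ → ℝ) (ρE : ℕ → ℝ) : Prop :=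
  (∀ i ∈ Finset.Icc 1 N, Measurable (qE i)) ∧
  (∀ i ∈ Finset.Icc 1 N, ∃ M : ℝ, ∀ t ∈ Set.Icc (0:ℝ) T, qE i t ≤ M) ∧
  (∀ i ∈ Finset.Icc 1 N, ∀ t ∈ Set.Icc (0:ℝ) T, 0 ≤ qE i t ∧ 0 ≤ wE i t) ∧
  (∀ i ∈ Finset.Icc 1 N, ContinuousOn (wE i) (Set.Icc 0 T) ∧
    ∃ F : Finset ℝ, ∀ t ∈ Set.Icc (0:ℝ) T, t ∉ F → DifferentiableAt ℝ (wE i) t) ∧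
  (∀ i ∈ Finset.Icc 1 N, ∀ t ∈ Set.Icc (0:ℝ) T,
    ρE i ≤ s t + c i + ∑ j ∈ Finset.Icc 1 i, wE j t ∧
    (0 < qE i t → s t + c i + ∑ j ∈ Finset.Icc 1 i, wE j t = ρE i)) ∧
  (∀ i ∈ Finset.Icc 1 N, ∫ t in (0:ℝ)..T, qE i t = Q i) ∧
  (∀ i ∈ Finset.Icc 1 N, ∀ t ∈ Set.Icc (0:ℝ) T,
    (∑ j ∈ Finset.Icc i N, qE j t) ≤
      μ i * deriv (fun u => u - (∑ j ∈ Finset.Icc 1 (i - 1), wE j u) - c i) t ∧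
    (0 < wE i t → (∑ j ∈ Finset.Icc i N, qE j t) =
      μ i * deriv (fun u => u - (∑ j ∈ Finset.Icc 1 (i - 1), wE j u) - c i) t))

/-- A feasible flow pattern: bounded measurable nonnegative flows respecting
the capacity constraints and the demand conservation. -/
def FeasibleFlow (N : ℕ) (T : ℝ) (μ Q : ℕ → ℝ) (r : ℕ → ℝ → ℝ) : Prop :=
  (∀ i ∈ Finset.Icc 1 N, Measurable (r i)) ∧
  (∀ i ∈ Finset.Icc 1 N, ∃ M : ℝ, ∀ t ∈ Set.Icc (0:ℝ) T, r i t ≤ M) ∧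
  (∀ i ∈ Finset.Icc 1 N, ∀ t ∈ Set.Icc (0:ℝ) T, 0 ≤ r i t) ∧
  (∀ i ∈ Finset.Icc 1 N, ∀ t ∈ Set.Icc (0:ℝ) T, (∑ j ∈ Finset.Icc i N, r j t) ≤ μ i) ∧
  (∀ i ∈ Finset.Icc 1 N, ∫ t in (0:ℝ)..T, r i t = Q i)


/-!
Since `s` is valley-shaped, each window `𝒯_i` is the sublevel set `{s ≤ s(t_i^-)}`; as the window
lengths increase, the windows are nested and `s(t_i^-)` increases with `i`. Hence the cumulative
price `∑_{j ≤ i} p_j` equals `s(t_i^-) - s` on `𝒯_i` and `0` elsewhere, which gives (E1), while on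
`𝒯_i` the flows `μ̂_j`, `j ≥ i`, telescope to `μ_i`, which gives (E2). A pricing equilibrium is
system optimal by weak duality: the cost of any feasible flow is `∑ ρ_i Q_i - ∫ ∑ p_j μ_j` plus
complementary-slackness terms, which are nonnegative and vanish for `q`. Finally, when the queuing
delays equal the prices, (E1) and (D1) are the same inequalities, so `ρ_i = ρ_i^E`.
-/

section Valley

variable {s : ℝ → ℝ} {lo m hi a b t : ℝ}

lemma apply_lt_of_strictQuasiconvex
    (hqc : ∀ x ∈ Icc lo hi, ∀ y ∈ Icc lo hi, x ≠ y →
      ∀ l ∈ Ioo (0:ℝ) 1, s (l * x + (1 - l) * y) < max (s x) (s y))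
    (hm : m ∈ Icc lo hi) (hmin : ∀ x ∈ Icc lo hi, s m ≤ s x)
    (ha : a ∈ Icc lo hi) (ham : a ≠ m) {l : ℝ} (hl : l ∈ Ico (0:ℝ) 1) :
    s (l * a + (1 - l) * m) < s a := by
  have hmax : max (s a) (s m) = s a := max_eq_left (hmin a ha)
  rcases hl.1.eq_or_lt with rfl | hl0
  · -- `l = 0` lies outside the hypothesis: pass through the midpoint of `a` and `m`
    have hmid := hqc a ha m hm ham (1 / 2) ⟨by norm_num, by norm_num⟩
    have hmid_mem : 1 / 2 * a + (1 - 1 / 2) * m ∈ Icc lo hi :=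
      ⟨by linarith [ha.1, hm.1], by linarith [ha.2, hm.2]⟩
    simpa [hmax] using (hmin _ hmid_mem).trans_lt hmid
  · simpa [hmax] using hqc a ha m hm ham l ⟨hl0, hl.2⟩

lemma strictAntiOn_of_strictQuasiconvex
    (hqc : ∀ x ∈ Icc lo hi, ∀ y ∈ Icc lo hi, x ≠ y →
      ∀ l ∈ Ioo (0:ℝ) 1, s (l * x + (1 - l) * y) < max (s x) (s y))
    (hm : m ∈ Icc lo hi) (hmin : ∀ x ∈ Icc lo hi, s m ≤ s x) :
    StrictAntiOn s (Icc lo m) := by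
  intro a ha b hb hab
  have hcomb : (m - b) / (m - a) * a + (1 - (m - b) / (m - a)) * m = b := by
    field_simp [(sub_pos.2 (hab.trans_le hb.2)).ne']
    ring
  rw [← hcomb]
  refine apply_lt_of_strictQuasiconvex hqc hm hmin ⟨ha.1, ha.2.trans hm.2⟩
    (hab.trans_le hb.2).ne ⟨div_nonneg (by linarith [hb.2]) (by linarith [hb.2]), ?_⟩
  exact (div_lt_one (by linarith [hb.2])).2 (by linarith)

lemma strictMonoOn_of_strictQuasiconvex
    (hqc : ∀ x ∈ Icc lo hi, ∀ y ∈ Icc lo hi, x ≠ y →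
      ∀ l ∈ Ioo (0:ℝ) 1, s (l * x + (1 - l) * y) < max (s x) (s y))
    (hm : m ∈ Icc lo hi) (hmin : ∀ x ∈ Icc lo hi, s m ≤ s x) :
    StrictMonoOn s (Icc m hi) := by
  intro a ha b hb hab
  have hcomb : (a - m) / (b - m) * b + (1 - (a - m) / (b - m)) * m = a := by
    field_simp [(sub_pos.2 (ha.1.trans_lt hab)).ne']
    ring
  rw [← hcomb]
  refine apply_lt_of_strictQuasiconvex hqc hm hmin ⟨hm.1.trans hb.1, hb.2⟩
    (ha.1.trans_lt hab).ne' ⟨div_nonneg (by linarith [ha.1]) (by linarith [ha.1]), ?_⟩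
  exact (div_lt_one (by linarith [ha.1])).2 (by linarith)

end Valley

section LevelInterval

variable {s : ℝ → ℝ} {lo m hi a b a' b' t : ℝ}

lemma mem_Ioo_of_apply_eq (hanti : StrictAntiOn s (Icc lo m)) (hmono : StrictMonoOn s (Icc m hi))
    (ha : lo ≤ a) (hb : b ≤ hi) (hab : a < b) (hs : s a = s b) : m ∈ Ioo a b := by
  constructor
  · by_contra! hma
    exact (hmono ⟨hma, hab.le.trans hb⟩ ⟨hma.trans hab.le, hb⟩ hab).ne hs
  · by_contra! hbm
    exact (hanti ⟨ha, hab.le.trans hbm⟩ ⟨ha.trans hab.le, hbm⟩ hab).ne hs.symm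

lemma apply_le_of_mem_Icc (hanti : StrictAntiOn s (Icc lo m)) (hmono : StrictMonoOn s (Icc m hi))
    (ha : lo ≤ a) (hb : b ≤ hi) (hs : s a = s b) (ht : t ∈ Icc a b) : s t ≤ s a := by
  rcases le_total t m with htm | hmt
  · exact hanti.antitoneOn ⟨ha, ht.1.trans htm⟩ ⟨ha.trans ht.1, htm⟩ ht.1
  · exact hs ▸ hmono.monotoneOn ⟨hmt, ht.2.trans hb⟩ ⟨hmt.trans ht.2, hb⟩ ht.2

lemma apply_lt_of_notMem_Icc (hanti : StrictAntiOn s (Icc lo m))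
    (hmono : StrictMonoOn s (Icc m hi)) (ha : lo ≤ a) (hb : b ≤ hi) (hab : a < b)
    (hs : s a = s b) (ht : t ∈ Icc lo hi) (hnot : t ∉ Icc a b) : s a < s t := by
  obtain ⟨ham, hmb⟩ := mem_Ioo_of_apply_eq hanti hmono ha hb hab hs
  rcases not_and_or.1 hnot with hta | hbt
  · have hta := not_le.1 hta
    exact hanti ⟨ht.1, hta.le.trans ham.le⟩ ⟨ha, ham.le⟩ hta
  · have hbt := not_le.1 hbt
    exact hs ▸ hmono ⟨hmb.le, hb⟩ ⟨hmb.le.trans hbt.le, ht.2⟩ hbt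

/-- Level intervals of a valley-shaped function are its sublevel sets, hence ordered by level. -/
lemma Icc_subset_Icc_of_apply_le (hanti : StrictAntiOn s (Icc lo m))
    (hmono : StrictMonoOn s (Icc m hi)) (ha : lo ≤ a) (hb : b ≤ hi) (hs : s a = s b)
    (ha' : lo ≤ a') (hb' : b' ≤ hi) (hab' : a' < b') (hs' : s a' = s b')
    (hle : s a ≤ s a') : Icc a b ⊆ Icc a' b' := by
  intro t ht
  by_contra hnot
  have hlt :=
    apply_lt_of_notMem_Icc hanti hmono ha' hb' hab' hs' ⟨ha.trans ht.1, ht.2.trans hb⟩ hnot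
  linarith [apply_le_of_mem_Icc hanti hmono ha hb hs ht]

end LevelInterval

lemma muhat_of_lt {N i : ℕ} (μ : ℕ → ℝ) (h : i < N) : muhat N μ i = μ i - μ (i + 1) := if_pos h

lemma muhat_self (N : ℕ) (μ : ℕ → ℝ) : muhat N μ N = μ N := if_neg (lt_irrefl N)

/-- Bottleneck `i` serves exactly the groups `j ≥ i` whose (nested) windows contain `t`, and the
capacity differences `μ̂ j` telescope to `μ k` for the smallest such `k`. -/
lemma sum_indicator_muhat_le {N : ℕ} {μ : ℕ → ℝ} {W : ℕ → Set ℝ}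
    (hW : ∀ j, 1 ≤ j → j < N → W j ⊆ W (j + 1)) (hμ : ∀ j, 1 ≤ j → j < N → μ (j + 1) ≤ μ j)
    (hμN : 0 ≤ μ N) {i : ℕ} (hi1 : 1 ≤ i) (hiN : i ≤ N) (t : ℝ) :
    ∑ j ∈ Finset.Icc i N, (W j).indicator (fun _ => muhat N μ j) t ≤ μ i ∧
      (t ∈ W i → ∑ j ∈ Finset.Icc i N, (W j).indicator (fun _ => muhat N μ j) t = μ i) := by
  induction hiN using Nat.decreasingInduction with
  | self =>
    simp only [Finset.Icc_self, sum_singleton, muhat_self]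
    refine ⟨?_, fun ht => indicator_of_mem ht _⟩
    by_cases ht : t ∈ W N
    · rw [indicator_of_mem ht]
    · rwa [indicator_of_notMem ht]
  | of_succ k hkN ih =>
    obtain ⟨ih_le, ih_eq⟩ := ih (by omega)
    rw [← Finset.insert_Icc_add_one_left_eq_Icc hkN.le, sum_insert (by simp)]
    by_cases ht : t ∈ W k
    · rw [indicator_of_mem ht, ih_eq (hW k hi1 hkN ht), muhat_of_lt μ hkN]
      exact ⟨(sub_add_cancel _ _).le, fun _ => sub_add_cancel _ _⟩
    · rw [indicator_of_notMem ht, zero_add]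
      exact ⟨ih_le.trans (hμ k hi1 hkN), fun h => absurd h ht⟩

lemma intervalIntegrable_of_nonneg_of_le {f : ℝ → ℝ} {a b M : ℝ} (hab : a ≤ b)
    (hf : Measurable f) (h0 : ∀ t ∈ Icc a b, 0 ≤ f t) (hM : ∀ t ∈ Icc a b, f t ≤ M) :
    IntervalIntegrable f volume a b := by
  rw [intervalIntegrable_iff_integrableOn_Icc_of_le hab]
  refine Measure.integrableOn_of_bounded (M := M) measure_Icc_lt_top.ne hf.aestronglyMeasurable ?_
  refine (ae_restrict_iff' measurableSet_Icc).2 (ae_of_all _ fun t ht => ?_)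
  rw [Real.norm_of_nonneg (h0 t ht)]
  exact hM t ht

lemma intervalIntegrable_finset_sum_apply {ι : Type*} {a b : ℝ} {s : Finset ι} {f : ι → ℝ → ℝ}
    (hf : ∀ i ∈ s, IntervalIntegrable (f i) volume a b) :
    IntervalIntegrable (fun t => ∑ i ∈ s, f i t) volume a b := by
  simpa only [← Finset.sum_apply] using IntervalIntegrable.sum s hf

lemma sum_Icc_sum_Icc_mul_comm (N : ℕ) (p r : ℕ → ℝ) :
    ∑ i ∈ Finset.Icc 1 N, (∑ j ∈ Finset.Icc 1 i, p j) * r i =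
      ∑ j ∈ Finset.Icc 1 N, p j * ∑ i ∈ Finset.Icc j N, r i := by
  simp_rw [sum_mul, mul_sum]
  exact sum_comm' fun i j => by simp only [Finset.mem_Icc]; omega

/-- Weak duality: a flow's cost is the dual value plus the complementary-slackness terms. -/
lemma sum_mul_eq_lagrangian_add_slack (N : ℕ) (a ρ p μ r : ℕ → ℝ) :
    ∑ i ∈ Finset.Icc 1 N, a i * r i =
      (∑ i ∈ Finset.Icc 1 N, ρ i * r i - ∑ j ∈ Finset.Icc 1 N, p j * μ j) +
      (∑ i ∈ Finset.Icc 1 N, (a i + ∑ j ∈ Finset.Icc 1 i, p j - ρ i) * r i +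
        ∑ j ∈ Finset.Icc 1 N, p j * (μ j - ∑ i ∈ Finset.Icc j N, r i)) := by
  have hswap := sum_Icc_sum_Icc_mul_comm N p r
  simp only [add_mul, sub_mul, mul_sub, sum_add_distrib, sum_sub_distrib] at hswap ⊢
  linear_combination -hswap

def socialCost (N : ℕ) (T : ℝ) (c : ℕ → ℝ) (s : ℝ → ℝ) (r : ℕ → ℝ → ℝ) : ℝ :=
  ∑ i ∈ Finset.Icc 1 N, ∫ t in (0:ℝ)..T, (s t + c i) * r i t

section WeakDuality

variable {N : ℕ} {T : ℝ} {μ Q c : ℕ → ℝ} {s : ℝ → ℝ} {q p r : ℕ → ℝ → ℝ} {ρ : ℕ → ℝ} {t : ℝ}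

lemma FeasibleFlow.intervalIntegrable (hr : FeasibleFlow N T μ Q r) (hT : 0 ≤ T) {i : ℕ}
    (hi : i ∈ Finset.Icc 1 N) : IntervalIntegrable (r i) volume 0 T := by
  obtain ⟨hmeas, hbdd, hnn, -⟩ := hr
  obtain ⟨M, hM⟩ := hbdd i hi
  exact intervalIntegrable_of_nonneg_of_le hT (hmeas i hi) (hnn i hi) hM

lemma FeasibleFlow.socialCost_eq_integral (hr : FeasibleFlow N T μ Q r) (hT : 0 ≤ T)
    (hs : ContinuousOn s (Icc 0 T)) :
    socialCost N T c s r = ∫ t in (0:ℝ)..T, ∑ i ∈ Finset.Icc 1 N, (s t + c i) * r i t := by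
  refine (intervalIntegral.integral_finsetSum fun i hi => ?_).symm
  refine (hr.intervalIntegrable hT hi).continuousOn_mul ?_
  rw [uIcc_of_le hT]
  exact hs.add continuousOn_const

lemma FeasibleFlow.intervalIntegrable_cost (hr : FeasibleFlow N T μ Q r) (hT : 0 ≤ T)
    (hs : ContinuousOn s (Icc 0 T)) :
    IntervalIntegrable (fun t => ∑ i ∈ Finset.Icc 1 N, (s t + c i) * r i t) volume 0 T := by
  refine intervalIntegrable_finset_sum_apply fun i hi => ?_
  refine (hr.intervalIntegrable hT hi).continuousOn_mul ?_
  rw [uIcc_of_le hT]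
  exact hs.add continuousOn_const

lemma FeasibleFlow.intervalIntegrable_lagrangian (hr : FeasibleFlow N T μ Q r) (hT : 0 ≤ T)
    (hp : ∀ j ∈ Finset.Icc 1 N, IntervalIntegrable (p j) volume 0 T) :
    IntervalIntegrable
      (fun t => ∑ i ∈ Finset.Icc 1 N, ρ i * r i t - ∑ j ∈ Finset.Icc 1 N, p j t * μ j) volume 0 T :=
  (intervalIntegrable_finset_sum_apply fun _ hi => (hr.intervalIntegrable hT hi).const_mul _).sub
    (intervalIntegrable_finset_sum_apply fun j hj => (hp j hj).mul_const _)

lemma FeasibleFlow.integral_lagrangian (hr : FeasibleFlow N T μ Q r) (hT : 0 ≤ T)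
    (hp : ∀ j ∈ Finset.Icc 1 N, IntervalIntegrable (p j) volume 0 T) :
    ∫ t in (0:ℝ)..T, (∑ i ∈ Finset.Icc 1 N, ρ i * r i t - ∑ j ∈ Finset.Icc 1 N, p j t * μ j) =
      ∑ i ∈ Finset.Icc 1 N, ρ i * Q i - ∫ t in (0:ℝ)..T, ∑ j ∈ Finset.Icc 1 N, p j t * μ j := by
  rw [intervalIntegral.integral_sub
      (intervalIntegrable_finset_sum_apply fun i hi => (hr.intervalIntegrable hT hi).const_mul _)
      (intervalIntegrable_finset_sum_apply fun j hj => (hp j hj).mul_const _),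
    intervalIntegral.integral_finsetSum fun i hi => (hr.intervalIntegrable hT hi).const_mul _]
  congr 1
  exact sum_congr rfl fun i hi => by rw [intervalIntegral.integral_const_mul, hr.2.2.2.2 i hi]

lemma IsPricingEq.feasibleFlow (heq : IsPricingEq N T μ Q c s q p ρ) :
    FeasibleFlow N T μ Q q := by
  obtain ⟨hmeas, hbdd, hnn, -, hcap, hdem⟩ := heq
  exact ⟨fun i hi => (hmeas i hi).1, fun i hi => (hbdd i hi).imp fun _ hM t ht => (hM t ht).1,
    fun i hi t ht => (hnn i hi t ht).1, fun i hi t ht => (hcap i hi t ht).1, hdem⟩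

lemma IsPricingEq.intervalIntegrable_price (heq : IsPricingEq N T μ Q c s q p ρ) (hT : 0 ≤ T)
    {j : ℕ} (hj : j ∈ Finset.Icc 1 N) : IntervalIntegrable (p j) volume 0 T := by
  obtain ⟨hmeas, hbdd, hnn, -⟩ := heq
  obtain ⟨M, hM⟩ := hbdd j hj
  exact intervalIntegrable_of_nonneg_of_le hT (hmeas j hj).2 (fun t ht => (hnn j hj t ht).2)
    fun t ht => (hM t ht).2

lemma IsPricingEq.lagrangian_le (heq : IsPricingEq N T μ Q c s q p ρ)
    (hr : FeasibleFlow N T μ Q r) (ht : t ∈ Icc 0 T) :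
    ∑ i ∈ Finset.Icc 1 N, ρ i * r i t - ∑ j ∈ Finset.Icc 1 N, p j t * μ j ≤
      ∑ i ∈ Finset.Icc 1 N, (s t + c i) * r i t := by
  rw [sum_mul_eq_lagrangian_add_slack N (fun i => s t + c i) ρ (fun j => p j t) μ (fun i => r i t)]
  obtain ⟨-, -, hnn, hE1, -⟩ := heq
  obtain ⟨-, -, hr0, hcap, -⟩ := hr
  refine le_add_of_nonneg_right (add_nonneg (sum_nonneg fun i hi => ?_) (sum_nonneg fun j hj => ?_))
  · exact mul_nonneg (sub_nonneg.2 (hE1 i hi t ht).1) (hr0 i hi t ht)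
  · exact mul_nonneg (hnn j hj t ht).2 (sub_nonneg.2 (hcap j hj t ht))

lemma IsPricingEq.lagrangian_eq (heq : IsPricingEq N T μ Q c s q p ρ) (ht : t ∈ Icc 0 T) :
    ∑ i ∈ Finset.Icc 1 N, ρ i * q i t - ∑ j ∈ Finset.Icc 1 N, p j t * μ j =
      ∑ i ∈ Finset.Icc 1 N, (s t + c i) * q i t := by
  rw [sum_mul_eq_lagrangian_add_slack N (fun i => s t + c i) ρ (fun j => p j t) μ (fun i => q i t)]
  obtain ⟨-, -, hnn, hE1, hE2, -⟩ := heq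
  have hslack₁ : ∀ i ∈ Finset.Icc 1 N,
      (s t + c i + ∑ j ∈ Finset.Icc 1 i, p j t - ρ i) * q i t = 0 := by
    intro i hi
    rcases (hnn i hi t ht).1.eq_or_lt with hq | hq
    · rw [← hq, mul_zero]
    · rw [(hE1 i hi t ht).2 hq, sub_self, zero_mul]
  have hslack₂ : ∀ j ∈ Finset.Icc 1 N, p j t * (μ j - ∑ i ∈ Finset.Icc j N, q i t) = 0 := by
    intro j hj
    rcases (hnn j hj t ht).2.eq_or_lt with hp | hp
    · rw [← hp, zero_mul]
    · rw [(hE2 j hj t ht).2 hp, sub_self, mul_zero]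
  rw [sum_eq_zero hslack₁, sum_eq_zero hslack₂, add_zero, add_zero]

theorem IsPricingEq.socialCost_le (heq : IsPricingEq N T μ Q c s q p ρ) (hT : 0 ≤ T)
    (hs : ContinuousOn s (Icc 0 T)) (hr : FeasibleFlow N T μ Q r) :
    socialCost N T c s q ≤ socialCost N T c s r := by
  have hq := heq.feasibleFlow
  have hp := fun j (hj : j ∈ Finset.Icc 1 N) => heq.intervalIntegrable_price hT hj
  calc socialCost N T c s q = ∫ t in (0:ℝ)..T, ∑ i ∈ Finset.Icc 1 N, (s t + c i) * q i t :=
        hq.socialCost_eq_integral hT hs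
    _ = ∫ t in (0:ℝ)..T, (∑ i ∈ Finset.Icc 1 N, ρ i * q i t - ∑ j ∈ Finset.Icc 1 N, p j t * μ j) :=
        intervalIntegral.integral_congr fun t ht =>
          (heq.lagrangian_eq (by rwa [uIcc_of_le hT] at ht)).symm
    _ = ∫ t in (0:ℝ)..T,
          (∑ i ∈ Finset.Icc 1 N, ρ i * r i t - ∑ j ∈ Finset.Icc 1 N, p j t * μ j) := by
        rw [hq.integral_lagrangian hT hp, hr.integral_lagrangian hT hp]
    _ ≤ ∫ t in (0:ℝ)..T, ∑ i ∈ Finset.Icc 1 N, (s t + c i) * r i t :=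
        intervalIntegral.integral_mono_on hT (hr.intervalIntegrable_lagrangian hT hp)
          (hr.intervalIntegrable_cost hT hs) fun t ht => heq.lagrangian_le hr ht
    _ = socialCost N T c s r := (hr.socialCost_eq_integral hT hs).symm

end WeakDuality

lemma exists_pos_of_intervalIntegral_pos {f : ℝ → ℝ} {a b : ℝ} (hab : a ≤ b)
    (hf : 0 < ∫ t in a..b, f t) : ∃ t ∈ Icc a b, 0 < f t := by
  by_contra! hle
  have hneg : 0 ≤ ∫ t in a..b, -f t :=
    intervalIntegral.integral_nonneg hab fun t ht => neg_nonneg.2 (hle t ht)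
  rw [intervalIntegral.integral_neg] at hneg
  linarith

/-- Equal queuing delays and prices give equal equilibrium costs: each group is active at some
time under both regimes, and there the two equilibrium conditions bound each cost by the other. -/
lemma IsPricingEq.rho_eq_of_isMorningDUE {N : ℕ} {T : ℝ} {μ Q c : ℕ → ℝ} {s : ℝ → ℝ}
    {q p qE wE : ℕ → ℝ → ℝ} {ρ ρE : ℕ → ℝ} (heq : IsPricingEq N T μ Q c s q p ρ)
    (hdue : IsMorningDUE N T μ Q c s qE wE ρE)
    (hwp : ∀ i ∈ Finset.Icc 1 N, ∀ t ∈ Icc (0:ℝ) T, wE i t = p i t) (hT : 0 ≤ T)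
    (hQ : ∀ i ∈ Finset.Icc 1 N, 0 < Q i) {i : ℕ} (hi : i ∈ Finset.Icc 1 N) : ρ i = ρE i := by
  have hsum : ∀ t ∈ Icc (0:ℝ) T, ∑ j ∈ Finset.Icc 1 i, wE j t = ∑ j ∈ Finset.Icc 1 i, p j t :=
    fun t ht => sum_congr rfl fun j hj =>
      hwp j (Finset.Icc_subset_Icc_right (Finset.mem_Icc.1 hi).2 hj) t ht
  obtain ⟨-, -, -, hE1, -, hE3⟩ := heq
  obtain ⟨-, -, -, -, hD1, hD2, -⟩ := hdue
  obtain ⟨t₁, ht₁, hq₁⟩ := exists_pos_of_intervalIntegral_pos hT ((hE3 i hi).symm ▸ hQ i hi)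
  obtain ⟨t₂, ht₂, hq₂⟩ := exists_pos_of_intervalIntegral_pos hT ((hD2 i hi).symm ▸ hQ i hi)
  have h₁ := (hE1 i hi t₁ ht₁).2 hq₁
  have h₁' := (hD1 i hi t₁ ht₁).1
  have h₂ := (hD1 i hi t₂ ht₂).2 hq₂
  have h₂' := (hE1 i hi t₂ ht₂).1
  rw [hsum t₁ ht₁] at h₁'
  rw [hsum t₂ ht₂] at h₂
  linarith

section ReducedNetwork

variable {N : ℕ} {T td : ℝ} {μ Q c : ℕ → ℝ} {s : ℝ → ℝ} {tm tp : ℕ → ℝ} {i : ℕ} {t : ℝ}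

lemma CorridorNet.strictAntiOn (hnet : CorridorNet N T td μ Q c s) :
    StrictAntiOn s (Icc 0 td) := by
  obtain ⟨-, -, htd, -, -, hs0, hstd, hqc⟩ := hnet
  exact strictAntiOn_of_strictQuasiconvex hqc (Ioo_subset_Icc_self htd) fun x hx => hstd ▸ hs0 x hx

lemma CorridorNet.strictMonoOn (hnet : CorridorNet N T td μ Q c s) :
    StrictMonoOn s (Icc td T) := by
  obtain ⟨-, -, htd, -, -, hs0, hstd, hqc⟩ := hnet
  exact strictMonoOn_of_strictQuasiconvex hqc (Ioo_subset_Icc_self htd) fun x hx => hstd ▸ hs0 x hx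

lemma ReducedNet.muhat_pos (hred : ReducedNet N T μ Q s tm tp) (hi : i ∈ Finset.Icc 1 N) :
    0 < muhat N μ i := by
  obtain ⟨hi1, hiN⟩ := Finset.mem_Icc.1 hi
  rcases hiN.lt_or_eq with hiN | rfl
  · rw [muhat_of_lt μ hiN]
    exact sub_pos.2 (hred.1 i hi1 hiN)
  · rw [muhat_self]
    exact hred.2.1

lemma ReducedNet.tm_lt_tp (hnet : CorridorNet N T td μ Q c s) (hred : ReducedNet N T μ Q s tm tp)
    (hi : i ∈ Finset.Icc 1 N) : tm i < tp i := by
  obtain ⟨-, -, hlen, -⟩ := hred.2.2.2 i hi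
  have := div_pos (hnet.2.2.2.1 i hi).2.1 (hred.muhat_pos hi)
  linarith

lemma ReducedNet.Icc_subset_Ioo (hred : ReducedNet N T μ Q s tm tp) (hi : i ∈ Finset.Icc 1 N) :
    Icc (tm i) (tp i) ⊆ Ioo 0 T :=
  let ⟨h0, hT, _⟩ := hred.2.2.2 i hi
  Set.Icc_subset_Ioo h0 hT

lemma ReducedNet.apply_le_of_mem_Icc (hnet : CorridorNet N T td μ Q c s)
    (hred : ReducedNet N T μ Q s tm tp) (hi : i ∈ Finset.Icc 1 N) (ht : t ∈ Icc (tm i) (tp i)) :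
    s t ≤ s (tm i) :=
  let ⟨h0, hT, _, hs⟩ := hred.2.2.2 i hi
  _root_.apply_le_of_mem_Icc hnet.strictAntiOn hnet.strictMonoOn h0.le hT.le hs ht

lemma ReducedNet.apply_lt_of_notMem_Icc (hnet : CorridorNet N T td μ Q c s)
    (hred : ReducedNet N T μ Q s tm tp) (hi : i ∈ Finset.Icc 1 N) (ht : t ∈ Icc 0 T)
    (hnot : t ∉ Icc (tm i) (tp i)) : s (tm i) < s t :=
  let ⟨h0, hT, _, hs⟩ := hred.2.2.2 i hi
  _root_.apply_lt_of_notMem_Icc hnet.strictAntiOn hnet.strictMonoOn h0.le hT.le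
    (hred.tm_lt_tp hnet hi) hs ht hnot

lemma ReducedNet.Icc_subset_Icc_of_apply_le (hnet : CorridorNet N T td μ Q c s)
    (hred : ReducedNet N T μ Q s tm tp) {j : ℕ} (hi : i ∈ Finset.Icc 1 N)
    (hj : j ∈ Finset.Icc 1 N) (hle : s (tm i) ≤ s (tm j)) :
    Icc (tm i) (tp i) ⊆ Icc (tm j) (tp j) :=
  let ⟨h0, hT, _, hs⟩ := hred.2.2.2 i hi
  let ⟨h0', hT', _, hs'⟩ := hred.2.2.2 j hj
  _root_.Icc_subset_Icc_of_apply_le hnet.strictAntiOn hnet.strictMonoOn h0.le hT.le hs h0'.le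
    hT'.le (hred.tm_lt_tp hnet hj) hs' hle

/-- The windows are nested because their lengths `Q i / μ̂ i` strictly increase. -/
lemma ReducedNet.apply_tm_lt_apply_tm_succ (hnet : CorridorNet N T td μ Q c s)
    (hred : ReducedNet N T μ Q s tm tp) (hi1 : 1 ≤ i) (hiN : i < N) :
    s (tm i) < s (tm (i + 1)) := by
  have hi : i ∈ Finset.Icc 1 N := Finset.mem_Icc.2 ⟨hi1, hiN.le⟩
  have hi' : i + 1 ∈ Finset.Icc 1 N := Finset.mem_Icc.2 ⟨by omega, hiN⟩
  by_contra! hle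
  have hsub := hred.Icc_subset_Icc_of_apply_le hnet hi' hi hle
  rw [Icc_subset_Icc_iff (hred.tm_lt_tp hnet hi').le] at hsub
  have hlen := hred.2.2.1 i hi1 hiN
  rw [← (hred.2.2.2 i hi).2.2.1, ← (hred.2.2.2 (i + 1) hi').2.2.1] at hlen
  linarith

lemma ReducedNet.Icc_subset_Icc_succ (hnet : CorridorNet N T td μ Q c s)
    (hred : ReducedNet N T μ Q s tm tp) (hi1 : 1 ≤ i) (hiN : i < N) :
    Icc (tm i) (tp i) ⊆ Icc (tm (i + 1)) (tp (i + 1)) :=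
  hred.Icc_subset_Icc_of_apply_le hnet (Finset.mem_Icc.2 ⟨hi1, hiN.le⟩)
    (Finset.mem_Icc.2 ⟨by omega, hiN⟩) (hred.apply_tm_lt_apply_tm_succ hnet hi1 hiN).le

end ReducedNetwork

section ExplicitDSO

variable {N : ℕ} {T td : ℝ} {μ Q c : ℕ → ℝ} {s : ℝ → ℝ} {tm tp : ℕ → ℝ}
  {q p : ℕ → ℝ → ℝ} {ρ : ℕ → ℝ} {i : ℕ} {t : ℝ}

lemma ExplicitDSO.flow_eq_indicator (hdso : ExplicitDSO N μ c s tm tp q p ρ)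
    (hi : i ∈ Finset.Icc 1 N) : q i = (Icc (tm i) (tp i)).indicator fun _ => muhat N μ i :=
  funext fun t => by rw [hdso.1 i hi t, indicator_apply]

lemma ExplicitDSO.sum_price_eq_indicator (hnet : CorridorNet N T td μ Q c s)
    (hred : ReducedNet N T μ Q s tm tp) (hdso : ExplicitDSO N μ c s tm tp q p ρ)
    (hi1 : 1 ≤ i) (hiN : i ≤ N) (t : ℝ) :
    ∑ j ∈ Finset.Icc 1 i, p j t = (Icc (tm i) (tp i)).indicator (fun u => s (tm i) - s u) t := by
  have ⟨_, hρ, hp⟩ := hdso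
  induction i, hi1 using Nat.le_induction with
  | base =>
    have h1 : 1 ∈ Finset.Icc 1 N := Finset.mem_Icc.2 ⟨le_rfl, hiN⟩
    rw [Finset.Icc_self, sum_singleton, hp 1 h1 t, hρ 1 h1, indicator_apply]
    split_ifs
    · rw [Nat.sub_self, Finset.Icc_eq_empty (by omega), sum_empty]
      ring
    · rfl
  | succ k hk ih =>
    have hk' : k + 1 ∈ Finset.Icc 1 N := Finset.mem_Icc.2 ⟨by omega, hiN⟩
    rw [sum_Icc_succ_top (by omega), hp (k + 1) hk' t, hρ (k + 1) hk',
      Nat.add_sub_cancel]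
    by_cases ht : t ∈ Icc (tm (k + 1)) (tp (k + 1))
    · rw [if_pos ht, indicator_of_mem ht]
      ring
    · have htk : t ∉ Icc (tm k) (tp k) := fun h => ht (hred.Icc_subset_Icc_succ hnet hk hiN h)
      rw [if_neg ht, indicator_of_notMem ht, add_zero, ih (by omega), indicator_of_notMem htk]

lemma ExplicitDSO.sum_price_le_sum_price_succ (hnet : CorridorNet N T td μ Q c s)
    (hred : ReducedNet N T μ Q s tm tp) (hdso : ExplicitDSO N μ c s tm tp q p ρ)
    {k : ℕ} (hkN : k < N) (t : ℝ) :
    ∑ j ∈ Finset.Icc 1 k, p j t ≤ ∑ j ∈ Finset.Icc 1 (k + 1), p j t := by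
  have hk' : k + 1 ∈ Finset.Icc 1 N := Finset.mem_Icc.2 ⟨by omega, hkN⟩
  rw [hdso.sum_price_eq_indicator hnet hred (by omega) hkN t]
  by_cases ht : t ∈ Icc (tm (k + 1)) (tp (k + 1))
  · rw [indicator_of_mem ht]
    have hle := hred.apply_le_of_mem_Icc hnet hk' ht
    rcases Nat.eq_zero_or_pos k with rfl | hk
    · simpa using hle
    rw [hdso.sum_price_eq_indicator hnet hred hk hkN.le t]
    by_cases htk : t ∈ Icc (tm k) (tp k)
    · rw [indicator_of_mem htk]
      linarith [hred.apply_tm_lt_apply_tm_succ hnet hk hkN]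
    · rwa [indicator_of_notMem htk, sub_nonneg]
  · rw [indicator_of_notMem ht]
    rcases Nat.eq_zero_or_pos k with rfl | hk
    · simp
    have htk : t ∉ Icc (tm k) (tp k) := fun h => ht (hred.Icc_subset_Icc_succ hnet hk hkN h)
    rw [hdso.sum_price_eq_indicator hnet hred hk hkN.le t, indicator_of_notMem htk]

lemma ExplicitDSO.price_nonneg (hnet : CorridorNet N T td μ Q c s)
    (hred : ReducedNet N T μ Q s tm tp) (hdso : ExplicitDSO N μ c s tm tp q p ρ)
    (hi : i ∈ Finset.Icc 1 N) (t : ℝ) : 0 ≤ p i t := by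
  obtain ⟨k, rfl⟩ : ∃ k, i = k + 1 := ⟨i - 1, by have := (Finset.mem_Icc.1 hi).1; omega⟩
  have h := hdso.sum_price_le_sum_price_succ hnet hred (Finset.mem_Icc.1 hi).2 t
  rw [sum_Icc_succ_top (by omega)] at h
  linarith

lemma ExplicitDSO.price_le (hnet : CorridorNet N T td μ Q c s)
    (hred : ReducedNet N T μ Q s tm tp) (hdso : ExplicitDSO N μ c s tm tp q p ρ)
    (hi : i ∈ Finset.Icc 1 N) (ht : t ∈ Icc 0 T) : p i t ≤ s (tm i) := by
  obtain ⟨hi1, hiN⟩ := Finset.mem_Icc.1 hi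
  calc p i t ≤ ∑ j ∈ Finset.Icc 1 i, p j t :=
        single_le_sum (fun j hj => hdso.price_nonneg hnet hred
          (Finset.Icc_subset_Icc_right hiN hj) t) (Finset.mem_Icc.2 ⟨hi1, le_rfl⟩)
    _ ≤ s (tm i) := by
        rw [hdso.sum_price_eq_indicator hnet hred hi1 hiN t, indicator_apply]
        have hs0 := hnet.2.2.2.2.2.1
        have htm : tm i ∈ Icc 0 T := Ioo_subset_Icc_self
          (hred.Icc_subset_Ioo hi (left_mem_Icc.2 (hred.tm_lt_tp hnet hi).le))
        split_ifs
        · linarith [hs0 t ht]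
        · exact hs0 _ htm

lemma ExplicitDSO.measurable_price (hnet : CorridorNet N T td μ Q c s)
    (hred : ReducedNet N T μ Q s tm tp) (hdso : ExplicitDSO N μ c s tm tp q p ρ)
    (hi : i ∈ Finset.Icc 1 N) : Measurable (p i) := by
  have hsum : ∀ k ≤ N, Measurable fun t => ∑ j ∈ Finset.Icc 1 k, p j t := by
    intro k hkN
    rcases Nat.eq_zero_or_pos k with rfl | hk
    · simp
    have hcont : ContinuousOn (fun u => s (tm k) - s u) (Icc (tm k) (tp k)) :=
      continuousOn_const.sub (hnet.2.2.2.2.1.mono ((hred.Icc_subset_Ioo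
        (Finset.mem_Icc.2 ⟨hk, hkN⟩)).trans Ioo_subset_Icc_self))
    simp_rw [hdso.sum_price_eq_indicator hnet hred hk hkN, ← piecewise_eq_indicator]
    exact hcont.measurable_piecewise continuousOn_const measurableSet_Icc
  obtain ⟨hi1, hkN⟩ := Finset.mem_Icc.1 hi
  obtain ⟨k, rfl⟩ : ∃ k, i = k + 1 := ⟨i - 1, by omega⟩
  have hp : p (k + 1) = fun t => ∑ j ∈ Finset.Icc 1 (k + 1), p j t - ∑ j ∈ Finset.Icc 1 k, p j t :=
    funext fun t => by rw [sum_Icc_succ_top (by omega)]; ring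
  rw [hp]
  exact (hsum (k + 1) hkN).sub (hsum k (by omega))

lemma ExplicitDSO.sum_flow_le (hnet : CorridorNet N T td μ Q c s)
    (hred : ReducedNet N T μ Q s tm tp) (hdso : ExplicitDSO N μ c s tm tp q p ρ)
    (hi : i ∈ Finset.Icc 1 N) (t : ℝ) :
    ∑ j ∈ Finset.Icc i N, q j t ≤ μ i ∧
      (t ∈ Icc (tm i) (tp i) → ∑ j ∈ Finset.Icc i N, q j t = μ i) := by
  obtain ⟨hi1, hiN⟩ := Finset.mem_Icc.1 hi
  have hsum : ∑ j ∈ Finset.Icc i N, q j t =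
      ∑ j ∈ Finset.Icc i N, (Icc (tm j) (tp j)).indicator (fun _ => muhat N μ j) t :=
    sum_congr rfl fun j hj => by
      rw [hdso.flow_eq_indicator (Finset.Icc_subset_Icc_left hi1 hj)]
  rw [hsum]
  exact sum_indicator_muhat_le (W := fun j => Icc (tm j) (tp j))
    (fun j hj1 hjN => hred.Icc_subset_Icc_succ hnet hj1 hjN)
    (fun j hj1 hjN => (hred.1 j hj1 hjN).le) hred.2.1.le hi1 hiN t

lemma ExplicitDSO.integral_flow (hnet : CorridorNet N T td μ Q c s)
    (hred : ReducedNet N T μ Q s tm tp) (hdso : ExplicitDSO N μ c s tm tp q p ρ)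
    (hi : i ∈ Finset.Icc 1 N) : ∫ t in (0:ℝ)..T, q i t = Q i := by
  have hW : Icc (tm i) (tp i) ⊆ Ioc 0 T := (hred.Icc_subset_Ioo hi).trans Ioo_subset_Ioc_self
  rw [hdso.flow_eq_indicator hi, intervalIntegral.integral_of_le hnet.2.1.le,
    setIntegral_indicator measurableSet_Icc, inter_eq_self_of_subset_right hW, setIntegral_const,
    Real.volume_real_Icc_of_le (hred.tm_lt_tp hnet hi).le, smul_eq_mul, (hred.2.2.2 i hi).2.2.1]
  exact div_mul_cancel₀ _ (hred.muhat_pos hi).ne'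

lemma ExplicitDSO.rho_le (hnet : CorridorNet N T td μ Q c s)
    (hred : ReducedNet N T μ Q s tm tp) (hdso : ExplicitDSO N μ c s tm tp q p ρ)
    (hi : i ∈ Finset.Icc 1 N) (ht : t ∈ Icc 0 T) :
    ρ i ≤ s t + c i + ∑ j ∈ Finset.Icc 1 i, p j t ∧
      (t ∈ Icc (tm i) (tp i) → s t + c i + ∑ j ∈ Finset.Icc 1 i, p j t = ρ i) := by
  obtain ⟨hi1, hiN⟩ := Finset.mem_Icc.1 hi
  rw [hdso.sum_price_eq_indicator hnet hred hi1 hiN t, hdso.2.1 i hi]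
  by_cases htW : t ∈ Icc (tm i) (tp i)
  · rw [indicator_of_mem htW]
    exact ⟨by linarith, fun _ => by ring⟩
  · rw [indicator_of_notMem htW]
    exact ⟨by linarith [hred.apply_lt_of_notMem_Icc hnet hi ht htW], fun h => absurd h htW⟩

theorem ExplicitDSO.isPricingEq (hnet : CorridorNet N T td μ Q c s)
    (hred : ReducedNet N T μ Q s tm tp) (hdso : ExplicitDSO N μ c s tm tp q p ρ) :
    IsPricingEq N T μ Q c s q p ρ := by
  have ⟨hq, _, hp⟩ := hdso
  have hflow : ∀ i ∈ Finset.Icc 1 N, ∀ t, 0 ≤ q i t ∧ q i t ≤ muhat N μ i := fun i hi t => by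
    rw [hq i hi t]
    split_ifs
    · exact ⟨(hred.muhat_pos hi).le, le_rfl⟩
    · exact ⟨le_rfl, (hred.muhat_pos hi).le⟩
  have hmem : ∀ i ∈ Finset.Icc 1 N, ∀ t, (0 < q i t ∨ 0 < p i t) → t ∈ Icc (tm i) (tp i) :=
    fun i hi t hpos => by
      by_contra htW
      rw [hq i hi t, hp i hi t, if_neg htW, if_neg htW] at hpos
      exact hpos.elim (lt_irrefl 0) (lt_irrefl 0)
  refine ⟨fun i hi => ⟨?_, hdso.measurable_price hnet hred hi⟩, fun i hi => ?_,
    fun i hi t _ => ⟨(hflow i hi t).1, hdso.price_nonneg hnet hred hi t⟩, fun i hi t ht => ?_,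
    fun i hi t _ => ?_, fun i hi => hdso.integral_flow hnet hred hi⟩
  · rw [hdso.flow_eq_indicator hi]
    exact measurable_const.indicator measurableSet_Icc
  · exact ⟨max (muhat N μ i) (s (tm i)), fun t ht =>
      ⟨(hflow i hi t).2.trans (le_max_left _ _),
        (hdso.price_le hnet hred hi ht).trans (le_max_right _ _)⟩⟩
  · obtain ⟨hle, heq⟩ := hdso.rho_le hnet hred hi ht
    exact ⟨hle, fun hq => heq (hmem i hi t (Or.inl hq))⟩
  · obtain ⟨hle, heq⟩ := hdso.sum_flow_le hnet hred hi t
    exact ⟨hle, fun hp => heq (hmem i hi t (Or.inr hp))⟩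

end ExplicitDSO

theorem stmt14_general (N : ℕ) (T td : ℝ) (μ Q c : ℕ → ℝ) (s : ℝ → ℝ)
    (tm tp : ℕ → ℝ) (q p : ℕ → ℝ → ℝ) (ρ : ℕ → ℝ)
    (qE wE : ℕ → ℝ → ℝ) (ρE : ℕ → ℝ)
    (hnet : CorridorNet N T td μ Q c s)
    (hred : ReducedNet N T μ Q s tm tp)
    (hdso : ExplicitDSO N μ c s tm tp q p ρ)
    (hdue : IsMorningDUE N T μ Q c s qE wE ρE)
    (hwp : ∀ i ∈ Finset.Icc 1 N, ∀ t ∈ Set.Icc (0:ℝ) T, wE i t = p i t)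
    :
    IsPricingEq N T μ Q c s q p ρ ∧
    (∀ r : ℕ → ℝ → ℝ, FeasibleFlow N T μ Q r →
      (∑ i ∈ Finset.Icc 1 N, ∫ t in (0:ℝ)..T, (s t + c i) * q i t) ≤
      (∑ i ∈ Finset.Icc 1 N, ∫ t in (0:ℝ)..T, (s t + c i) * r i t)) ∧
    (∀ i ∈ Finset.Icc 1 N, ρ i = ρE i) := by
  have heq := hdso.isPricingEq hnet hred
  obtain ⟨-, hT, -, hμQc, hs, -⟩ := hnet
  refine ⟨heq, fun r hr => heq.socialCost_le hT.le hs hr, fun i hi => ?_⟩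
  exact heq.rho_eq_of_isMorningDUE hdue hwp hT.le (fun j hj => (hμQc j hj).2.1) hi

/-- first-best pricing achieves system optimum with Pareto
improvement: imposing prices equal to the DUE queuing delays yields the
pricing equilibrium, whose flow pattern minimizes the social transport cost,
and equilibrium commuting costs are unchanged. -/
theorem stmt14 (N : ℕ) (T td : ℝ) (μ Q c : ℕ → ℝ) (s s' : ℝ → ℝ)
    (tm tp : ℕ → ℝ) (q p : ℕ → ℝ → ℝ) (ρ : ℕ → ℝ)
    (qE wE : ℕ → ℝ → ℝ) (ρE : ℕ → ℝ)
    (hnet : CorridorNet N T td μ Q c s)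
    (hred : ReducedNet N T μ Q s tm tp)
    (hdso : ExplicitDSO N μ c s tm tp q p ρ)
    (hs' : PiecewiseC1 T td s s')
    (hdue : IsMorningDUE N T μ Q c s qE wE ρE)
    (hwp : ∀ i ∈ Finset.Icc 1 N, ∀ t ∈ Set.Icc (0:ℝ) T, wE i t = p i t)
    :
    IsPricingEq N T μ Q c s q p ρ ∧
    (∀ r : ℕ → ℝ → ℝ, FeasibleFlow N T μ Q r →
      (∑ i ∈ Finset.Icc 1 N, ∫ t in (0:ℝ)..T, (s t + c i) * q i t) ≤
      (∑ i ∈ Finset.Icc 1 N, ∫ t in (0:ℝ)..T, (s t + c i) * r i t)) ∧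
    (∀ i ∈ Finset.Icc 1 N, ρ i = ρE i) :=
  stmt14_general N T td μ Q c s tm tp q p ρ qE wE ρE hnet hred hdso hdue hwp
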